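/- arXiv:1710.00437 — 2 statements merged into one kernel-verified Lean document; each statement's English description precedes it below -/
import Mathlib

section
/- Let d > 0 and let {f_ρ}_{ρ∈(0,d]} be a family of C¹ functions [0, d] → ℝ. Suppose the family of derivatives {f_ρ′}_ρ converges uniformly in {[ρ, d]}_ρ to a function g : (0, d] → ℝ such that lim_{x→0⁺} g(x) = G exists and is finite, and suppose lim_{ρ→0⁺} f_ρ(ρ) = F exists and is finite. Then the family {f_ρ}_ρ converges uniformly in {[ρ, d]}_ρ to a differentiable function f : (0, d] → ℝ with f′ = g on (0, d], namely f(x) = F + ∫₀ˣ ḡ(y) dy where ḡ is the continuous extension of g with ḡ(0) = G. -/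
/-!
On `[ρ, τ]` the fundamental theorem of calculus gives
`f_ρ(τ) - (F + ∫₀^τ ḡ) = (f_ρ(ρ) - F) + ∫_ρ^τ (f_ρ' - g) - ∫₀^ρ ḡ`.
The first term tends to `0` by hypothesis, the second is at most `d · sup_{[ρ,d]} |f_ρ' - g|`,
and the third tends to `0` because `ḡ` is continuous on `[0, d]`: `g` is continuous on `(0, d]`
as a locally uniform limit of continuous functions, and `ḡ` extends it continuously to `0`.
-/

open Set Filter Topology MeasureTheory intervalIntegral

def TendstoUniformlyOnShrinkingIcc (F : ℝ → ℝ → ℝ) (f : ℝ → ℝ) (d : ℝ) : Prop :=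
  ∀ ε > 0, ∃ δ > 0, ∀ ρ : ℝ, 0 < ρ → ρ < δ → ∀ τ ∈ Icc ρ d, |F ρ τ - f τ| < ε

section TendstoUniformlyOnShrinkingIcc

variable {F : ℝ → ℝ → ℝ} {f : ℝ → ℝ} {d : ℝ}

theorem tendstoUniformlyOnShrinkingIcc_iff :
    TendstoUniformlyOnShrinkingIcc F f d ↔
      ∀ ε > 0, ∀ᶠ ρ in 𝓝[>] 0, ∀ τ ∈ Icc ρ d, |F ρ τ - f τ| < ε := by
  simp only [TendstoUniformlyOnShrinkingIcc, (nhdsGT_basis (0 : ℝ)).eventually_iff, mem_Ioo,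
    and_imp]

theorem TendstoUniformlyOnShrinkingIcc.tendstoUniformlyOn
    (h : TendstoUniformlyOnShrinkingIcc F f d) {a : ℝ} (ha : 0 < a) :
    TendstoUniformlyOn F f (𝓝[>] 0) (Icc a d) := by
  refine Metric.tendstoUniformlyOn_iff.2 fun ε hε => ?_
  filter_upwards [tendstoUniformlyOnShrinkingIcc_iff.1 h ε hε, Ioo_mem_nhdsGT ha]
    with ρ hρ hρa x hx
  rw [Real.dist_eq, abs_sub_comm]
  exact hρ x ⟨hρa.2.le.trans hx.1, hx.2⟩

theorem TendstoUniformlyOnShrinkingIcc.tendstoLocallyUniformlyOn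
    (h : TendstoUniformlyOnShrinkingIcc F f d) :
    TendstoLocallyUniformlyOn F f (𝓝[>] 0) (Ioc 0 d) := by
  refine tendstoLocallyUniformlyOn_of_forall_exists_nhds fun x hx => ?_
  have hx₂ : 0 < x / 2 := half_pos hx.1
  refine ⟨Icc (x / 2) d, ?_, h.tendstoUniformlyOn hx₂⟩
  exact mem_nhdsWithin.2 ⟨Ioi (x / 2), isOpen_Ioi, half_lt_self hx.1,
    fun y hy => ⟨hy.1.le, hy.2.2⟩⟩

end TendstoUniformlyOnShrinkingIcc

theorem continuousOn_Icc_of_tendsto_nhdsGT {g gbar : ℝ → ℝ} {a b G : ℝ} (hab : a < b)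
    (hg : ContinuousOn g (Ioc a b)) (hG : Tendsto g (𝓝[>] a) (𝓝 G))
    (hgbar : EqOn gbar g (Ioc a b)) (hgbar_a : gbar a = G) :
    ContinuousOn gbar (Icc a b) := by
  rw [← Ioc_insert_left hab.le]
  rintro x hx
  rw [continuousWithinAt_insert]
  rcases hx with rfl | hx
  · rw [ContinuousWithinAt, hgbar_a]
    refine (hG.mono_left (nhdsWithin_mono _ Ioc_subset_Ioi_self)).congr' ?_
    filter_upwards [self_mem_nhdsWithin] with y hy using (hgbar hy).symm
  · exact (hg x hx).congr hgbar (hgbar hx)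

theorem hasDerivWithinAt_integral_Icc {g : ℝ → ℝ} {a b x : ℝ} (hg : ContinuousOn g (Icc a b))
    (hx : x ∈ Icc a b) :
    HasDerivWithinAt (fun t => ∫ y in a..t, g y) (g x) (Icc a b) x := by
  have : Fact (x ∈ Icc a b) := ⟨hx⟩
  exact integral_hasDerivWithinAt_right
    (hg.mono (uIcc_subset_Icc (left_mem_Icc.2 (hx.1.trans hx.2)) hx)).intervalIntegrable
    (hg.stronglyMeasurableAtFilter_nhdsWithin measurableSet_Icc x) (hg x hx)

theorem abs_sub_add_integral_le {f f' g : ℝ → ℝ} {a ρ τ c η : ℝ} (hρτ : ρ ≤ τ)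
    (hf : ∀ y ∈ Icc ρ τ, HasDerivWithinAt f (f' y) (Icc ρ τ) y)
    (hf' : IntervalIntegrable f' volume ρ τ)
    (hg₀ : IntervalIntegrable g volume a ρ) (hg : IntervalIntegrable g volume ρ τ)
    (hη : ∀ y ∈ Ioc ρ τ, |f' y - g y| ≤ η) :
    |f τ - (c + ∫ y in a..τ, g y)| ≤ |f ρ - c| + η * (τ - ρ) + |∫ y in a..ρ, g y| := by
  have ftc : ∫ y in ρ..τ, f' y = f τ - f ρ :=
    integral_eq_sub_of_hasDerivAt_of_le hρτ (fun y hy => (hf y hy).continuousWithinAt)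
      (fun y hy => (hf y (Ioo_subset_Icc_self hy)).hasDerivAt (Icc_mem_nhds hy.1 hy.2)) hf'
  have split : f τ - (c + ∫ y in a..τ, g y) =
      (f ρ - c) + (∫ y in ρ..τ, f' y - g y) - ∫ y in a..ρ, g y := by
    rw [integral_sub hf' hg, ← integral_add_adjacent_intervals hg₀ hg, ftc]
    ring
  have hbound : |∫ y in ρ..τ, f' y - g y| ≤ η * (τ - ρ) := by
    simpa [abs_of_nonneg (sub_nonneg.2 hρτ)] using
      norm_integral_le_of_norm_le_const (a := ρ) (b := τ) (f := fun y => f' y - g y)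
        (fun y hy => by rw [uIoc_of_le hρτ] at hy; exact hη y hy)
  rw [split]
  calc _ ≤ |f ρ - c| + |∫ y in ρ..τ, f' y - g y| + |∫ y in a..ρ, g y| :=
        (abs_sub _ _).trans (add_le_add_left (abs_add_le _ _) _)
    _ ≤ _ := by gcongr

theorem tendstoUniformlyOnShrinkingIcc_const_add_integral {F F' : ℝ → ℝ → ℝ} {g gbar : ℝ → ℝ}
    {d c : ℝ} (hd : 0 < d)
    (hF : ∀ ρ ∈ Ioc 0 d, ∀ τ ∈ Icc 0 d, HasDerivWithinAt (F ρ) (F' ρ τ) (Icc 0 d) τ)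
    (hF'c : ∀ ρ ∈ Ioc 0 d, ContinuousOn (F' ρ) (Icc 0 d))
    (hF' : TendstoUniformlyOnShrinkingIcc F' g d)
    (hFc : Tendsto (fun ρ => F ρ ρ) (𝓝[>] 0) (𝓝 c))
    (hgbar : ContinuousOn gbar (Icc 0 d)) (hgbar_eq : EqOn gbar g (Ioc 0 d)) :
    TendstoUniformlyOnShrinkingIcc F (fun τ => c + ∫ y in 0..τ, gbar y) d := by
  have hprim : Tendsto (fun ρ => ∫ y in 0..ρ, gbar y) (𝓝[>] 0) (𝓝 0) := by
    simpa using ((hasDerivWithinAt_integral_Icc hgbar (left_mem_Icc.2 hd.le)).continuousWithinAt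
      |>.mono_of_mem_nhdsWithin (Icc_mem_nhdsGT hd)).tendsto
  rw [tendstoUniformlyOnShrinkingIcc_iff] at hF' ⊢
  intro ε hε
  filter_upwards [Ioo_mem_nhdsGT hd, hF' (ε / (3 * d)) (by positivity),
    Metric.tendsto_nhds.1 hFc (ε / 3) (by positivity),
    Metric.tendsto_nhds.1 hprim (ε / 3) (by positivity)] with ρ hρ hF'ρ hFρ hprimρ τ hτ
  rw [Real.dist_eq] at hFρ hprimρ
  rw [sub_zero] at hprimρ
  have hsub : Icc ρ τ ⊆ Icc 0 d := Icc_subset_Icc hρ.1.le hτ.2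
  have hestimate := abs_sub_add_integral_le (c := c) hτ.1
    (fun y hy => (hF ρ ⟨hρ.1, hρ.2.le⟩ y (hsub hy)).mono hsub)
    ((hF'c ρ ⟨hρ.1, hρ.2.le⟩).mono hsub |>.intervalIntegrable_of_Icc hτ.1)
    (hgbar.mono (Icc_subset_Icc le_rfl hρ.2.le) |>.intervalIntegrable_of_Icc hρ.1.le)
    (hgbar.mono hsub |>.intervalIntegrable_of_Icc hτ.1)
    (fun y hy => by
      rw [hgbar_eq ⟨hρ.1.trans hy.1, hy.2.trans hτ.2⟩]
      exact (hF'ρ y ⟨hy.1.le, hy.2.trans hτ.2⟩).le)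
  have hmiddle : ε / (3 * d) * (τ - ρ) ≤ ε / 3 := by
    rw [div_mul_eq_mul_div, div_le_iff₀ (by positivity)]
    nlinarith [hτ.2, hρ.1]
  linarith

/-- If the derivatives of a family of `C¹` functions on `[0, d]` converge
uniformly in `{[ρ, d]}_ρ` to `g` having a finite limit `G` at `0⁺`, and
`f_ρ(ρ) → F`, then the family converges uniformly in `{[ρ, d]}_ρ` to
`x ↦ F + ∫₀ˣ ḡ`, which is differentiable with derivative `g` on `(0, d]`. -/
theorem stmt_10 (d : ℝ) (hd : 0 < d)
    (F F' : ℝ → ℝ → ℝ) (g : ℝ → ℝ) (G Fv : ℝ)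
    (hFderiv : ∀ ρ ∈ Set.Ioc (0 : ℝ) d, ∀ τ ∈ Set.Icc (0 : ℝ) d,
      HasDerivWithinAt (F ρ) (F' ρ τ) (Set.Icc (0 : ℝ) d) τ)
    (hF'c : ∀ ρ ∈ Set.Ioc (0 : ℝ) d, ContinuousOn (F' ρ) (Set.Icc (0 : ℝ) d))
    (hF' : ∀ ε > 0, ∃ δ > 0, ∀ ρ : ℝ, 0 < ρ → ρ < δ →
      ∀ τ ∈ Set.Icc ρ d, |F' ρ τ - g τ| < ε)
    (hG : Filter.Tendsto g (nhdsWithin 0 (Set.Ioi 0)) (nhds G))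
    (hFv : Filter.Tendsto (fun ρ => F ρ ρ) (nhdsWithin 0 (Set.Ioi 0)) (nhds Fv))
    (gbar : ℝ → ℝ) (hgbar : ∀ y ∈ Set.Ioc (0 : ℝ) d, gbar y = g y) (hgbar0 : gbar 0 = G) :
    (∀ ε > 0, ∃ δ > 0, ∀ ρ : ℝ, 0 < ρ → ρ < δ →
      ∀ τ ∈ Set.Icc ρ d, |F ρ τ - (Fv + ∫ y in (0 : ℝ)..τ, gbar y)| < ε) ∧
    (∀ x ∈ Set.Ioc (0 : ℝ) d,
      HasDerivWithinAt (fun t => Fv + ∫ y in (0 : ℝ)..t, gbar y) (g x) (Set.Ioc (0 : ℝ) d) x) := by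
  have hF'_unif : TendstoUniformlyOnShrinkingIcc F' g d := hF'
  have hgc : ContinuousOn g (Ioc 0 d) :=
    hF'_unif.tendstoLocallyUniformlyOn.continuousOn <| Eventually.frequently <| by
      filter_upwards [Ioc_mem_nhdsGT hd] with ρ hρ using (hF'c ρ hρ).mono Ioc_subset_Icc_self
  have hgbarc : ContinuousOn gbar (Icc 0 d) :=
    continuousOn_Icc_of_tendsto_nhdsGT hd hgc hG hgbar hgbar0
  refine ⟨tendstoUniformlyOnShrinkingIcc_const_add_integral hd hFderiv hF'c hF'_unif hFv hgbarc
    hgbar, fun x hx => ?_⟩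
  rw [← hgbar x hx]
  exact ((hasDerivWithinAt_integral_Icc hgbarc (Ioc_subset_Icc_self hx)).mono
    Ioc_subset_Icc_self).const_add Fv
end

section
/- Let d > 0 and let {S_ρ}_{ρ∈(0,d]} be a family of C¹ functions [−d, d] → ℝ that converges uniformly in {[−d, −ρ] ∪ [ρ, d]}_ρ to a function S : [−d, d] \ {0} → ℝ whose one-sided limits S₋ = lim_{τ→0⁻} S(τ) and S₊ = lim_{τ→0⁺} S(τ) exist and are finite. Then lim_{ρ→0⁺} ∫_{−ρ}^{ρ} S_ρ′(τ) dτ = S₊ − S₋. -/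
/-!
By the fundamental theorem of calculus the integral equals `S_ρ(ρ) − S_ρ(−ρ)`. The points `±ρ`
lie in `[−d, −ρ] ∪ [ρ, d]`, so uniform convergence there lets us replace `S_ρ(±ρ)` by `S(±ρ)` up
to an error tending to zero, and `S(ρ) − S(−ρ) → S₊ − S₋` as `ρ → 0⁺`.
-/

open Set Filter Topology

/-- The paper's "`F_ρ` converges uniformly in `{K_ρ}_ρ` to `f` as `ρ → 0⁺`". -/
def TendstoUniformlyOnFamily {α : Type*} (F : ℝ → α → ℝ) (f : α → ℝ) (K : ℝ → Set α) : Prop :=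
  ∀ ε > 0, ∃ δ > 0, ∀ ρ : ℝ, 0 < ρ → ρ < δ → ∀ τ ∈ K ρ, |F ρ τ - f τ| < ε

theorem TendstoUniformlyOnFamily.tendsto_comp {α : Type*} {F : ℝ → α → ℝ} {f : α → ℝ}
    {K : ℝ → Set α} (hF : TendstoUniformlyOnFamily F f K) {τ : ℝ → α}
    (hτ : ∀ᶠ ρ in 𝓝[>] 0, τ ρ ∈ K ρ) :
    Tendsto (fun ρ => F ρ (τ ρ) - f (τ ρ)) (𝓝[>] 0) (𝓝 0) := by
  refine Metric.tendsto_nhds.2 fun ε hε => ?_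
  obtain ⟨δ, hδ, hF⟩ := hF ε hε
  filter_upwards [hτ, Ioo_mem_nhdsGT hδ] with ρ hρ hρδ
  simpa only [Real.dist_eq, sub_zero] using hF ρ hρδ.1 hρδ.2 _ hρ

theorem integral_eq_sub_of_hasDerivWithinAt_Icc {E : Type*} [NormedAddCommGroup E]
    [NormedSpace ℝ E] [CompleteSpace E] {f f' : ℝ → E} {a b c e : ℝ}
    (hf : ∀ x ∈ Icc a b, HasDerivWithinAt f (f' x) (Icc a b) x)
    (hf' : ContinuousOn f' (Icc a b)) (hac : a ≤ c) (hce : c ≤ e) (heb : e ≤ b) :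
    ∫ x in c..e, f' x = f e - f c := by
  have hsub : Icc c e ⊆ Icc a b := Icc_subset_Icc hac heb
  refine intervalIntegral.integral_eq_sub_of_hasDerivAt_of_le hce
    (fun x hx => (hf x (hsub hx)).continuousWithinAt.mono hsub) (fun x hx => ?_)
    ((hf'.mono hsub).intervalIntegrable_of_Icc hce)
  exact (hf x (hsub (Ioo_subset_Icc_self hx))).hasDerivAt
    (Icc_mem_nhds (hac.trans_lt hx.1) (hx.2.trans_le heb))

/-- Pillbox integration of the derivative of the slope function: the integral
of `S_ρ′` over `[−ρ, ρ]` tends to the jump `S₊ − S₋` of the limit function. -/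
theorem stmt_17 (d : ℝ) (hd : 0 < d)
    (S S' : ℝ → ℝ → ℝ) (Slim : ℝ → ℝ) (Sm Sp : ℝ)
    (hSderiv : ∀ ρ ∈ Set.Ioc (0 : ℝ) d, ∀ τ ∈ Set.Icc (-d) d,
      HasDerivWithinAt (S ρ) (S' ρ τ) (Set.Icc (-d) d) τ)
    (hS'c : ∀ ρ ∈ Set.Ioc (0 : ℝ) d, ContinuousOn (S' ρ) (Set.Icc (-d) d))
    (hconv : ∀ ε > 0, ∃ δ > 0, ∀ ρ : ℝ, 0 < ρ → ρ < δ →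
      ∀ τ ∈ Set.Icc (-d) (-ρ) ∪ Set.Icc ρ d, |S ρ τ - Slim τ| < ε)
    (hSm : Filter.Tendsto Slim (nhdsWithin 0 (Set.Iio 0)) (nhds Sm))
    (hSp : Filter.Tendsto Slim (nhdsWithin 0 (Set.Ioi 0)) (nhds Sp)) :
    Filter.Tendsto (fun ρ => ∫ τ in (-ρ)..ρ, S' ρ τ)
      (nhdsWithin 0 (Set.Ioi 0)) (nhds (Sp - Sm)) := by
  have hconv' : TendstoUniformlyOnFamily S Slim (fun ρ => Icc (-d) (-ρ) ∪ Icc ρ d) := hconv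
  have hρ : ∀ᶠ ρ in 𝓝[>] (0 : ℝ), ρ ∈ Ioc 0 d := Ioc_mem_nhdsGT hd
  have hFTC : ∀ᶠ ρ in 𝓝[>] (0 : ℝ), S ρ ρ - S ρ (-ρ) = ∫ τ in (-ρ)..ρ, S' ρ τ := by
    filter_upwards [hρ] with ρ hρ
    exact (integral_eq_sub_of_hasDerivWithinAt_Icc (hSderiv ρ hρ) (hS'c ρ hρ)
      (by linarith [hρ.2]) (by linarith [hρ.1]) hρ.2).symm
  have hright := hconv'.tendsto_comp (τ := id) <| by
    filter_upwards [hρ] with ρ hρ using Or.inr ⟨le_rfl, hρ.2⟩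
  have hleft := hconv'.tendsto_comp (τ := Neg.neg) <| by
    filter_upwards [hρ] with ρ hρ using Or.inl ⟨neg_le_neg hρ.2, le_rfl⟩
  have hjump : Tendsto (fun ρ => Slim ρ - Slim (-ρ)) (𝓝[>] 0) (𝓝 (Sp - Sm)) :=
    hSp.sub (hSm.comp (by simpa using tendsto_neg_nhdsGT (a := (0 : ℝ))))
  have hsum := (hright.sub hleft).add hjump
  rw [sub_zero, zero_add] at hsum
  exact (hsum.congr fun ρ => by simp only [id]; ring).congr' hFTC
end
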